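/- arXiv:1501.04891 — 7 statements merged into one kernel-verified Lean document; each statement's English description precedes it below -/
import Mathlib

section
/- The involution ι exchanges the two conifold discriminants up to explicit factors: ι(Δ₁) = (432z₁)³·Δ₂ and ι(Δ₂) = Δ₁/(1−432z₁)³, as elements of ℂ(z₁,z₂). -/
open MvPolynomial

noncomputable section

/-- `K = ℂ(z₁,z₂)`, the field of rational functions in two variables over `ℂ`. -/
abbrev K2 : Type := FractionRing (MvPolynomial (Fin 2) ℂ)

/-- The rational function `z₁`. -/
def z1 : K2 := algebraMap (MvPolynomial (Fin 2) ℂ) K2 (X 0)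

/-- The rational function `z₂`. -/
def z2 : K2 := algebraMap (MvPolynomial (Fin 2) ℂ) K2 (X 1)

/-- The conifold discriminant `Δ₁ = (1−432z₁)³ − 27·(432z₁)³·z₂`. -/
def Δ1 : K2 := (1 - 432 * z1) ^ 3 - 27 * (432 * z1) ^ 3 * z2

/-- The conifold discriminant `Δ₂ = 1 + 27z₂`. -/
def Δ2 : K2 := 1 + 27 * z2

/-- The involution `ι` exchanges the two conifold discriminants up to explicit factors:
`ι(Δ₁) = (432z₁)³·Δ₂` and `ι(Δ₂) = Δ₁/(1−432z₁)³`. -/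
theorem involution_exchanges_discriminants (ι : K2 →ₐ[ℂ] K2)
    (h1 : ι z1 = 1 / 432 - z1)
    (h2 : ι z2 = -((432 * z1) ^ 3 * z2) / (1 - 432 * z1) ^ 3) :
    ι Δ1 = (432 * z1) ^ 3 * Δ2 ∧ ι Δ2 = Δ1 / (1 - 432 * z1) ^ 3 := by
  have key : algebraMap (MvPolynomial (Fin 2) ℂ) K2 (1 - 432 * X 0) = 1 - 432 * z1 := by
    simp [z1, map_sub, map_mul, map_ofNat]
  have hz : (1 : K2) - 432 * z1 ≠ 0 := by
    intro h
    have h0 : (1 : MvPolynomial (Fin 2) ℂ) - 432 * X 0 = 0 :=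
      IsFractionRing.injective (MvPolynomial (Fin 2) ℂ) K2 (by rw [key, h, map_zero])
    have hc := congrArg (eval (fun _ => (0 : ℂ))) h0
    simp at hc
  constructor
  · rw [Δ1, Δ2]
    simp only [map_sub, map_mul, map_pow, map_one, map_ofNat, h1, h2]
    field_simp
    ring
  · rw [Δ1, Δ2]
    simp only [map_add, map_mul, map_one, map_ofNat, h2]
    field_simp
    ring

end
end

section
/- For all integers g and all natural numbers m, n, k with 0 ≤ k ≤ m, the involution ι transforms the basic rational functions as follows: ι( z₁^k (1/432−z₁)^{m−k} z₂^n (Δ₁Δ₂)^{−(2g−2)} ) = (−1)^n · z₁^{m−k+3n−6g+6} (1/432−z₁)^{k−3n+6g−6} z₂^n (Δ₁Δ₂)^{−(2g−2)}, where all (possibly negative) integer exponents are taken in the field ℂ(z₁,z₂). -/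
open MvPolynomial

noncomputable section

set_option synthInstance.maxHeartbeats 400000 in
set_option maxHeartbeats 1000000 in
lemma alg_ne' (p : MvPolynomial (Fin 2) ℂ) (hp : p ≠ 0) :
    algebraMap (MvPolynomial (Fin 2) ℂ) K2 p ≠ 0 :=
  (map_ne_zero_iff _ (IsFractionRing.injective (MvPolynomial (Fin 2) ℂ) K2)).mpr hp

lemma hz1' : z1 ≠ 0 := alg_ne' _ (X_ne_zero 0)

lemma poly_ne' (p : MvPolynomial (Fin 2) ℂ) (h : eval (0 : Fin 2 → ℂ) p ≠ 0) : p ≠ 0 :=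
  fun hp => h (by simp [hp])

set_option synthInstance.maxHeartbeats 400000 in
set_option maxHeartbeats 1000000 in
lemma h1sub' : (1 : K2) - 432 * z1 ≠ 0 := by
  have : (1 : K2) - 432 * z1 = algebraMap (MvPolynomial (Fin 2) ℂ) K2 (1 - 432 * X 0) := by
    simp [z1, map_sub, map_mul, map_one, map_ofNat]
  rw [this]; exact alg_ne' _ (poly_ne' _ (by simp))

lemma hbne' : (1 : K2) / 432 - z1 ≠ 0 := by
  intro h
  apply h1sub'
  have : (432 : K2) * (1/432 - z1) = 1 - 432 * z1 := by rw [mul_sub]; norm_num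
  rw [← this, h, mul_zero]

set_option synthInstance.maxHeartbeats 400000 in
set_option maxHeartbeats 1000000 in
lemma hΔ1' : Δ1 ≠ 0 := by
  have : Δ1 = algebraMap (MvPolynomial (Fin 2) ℂ) K2
      ((1 - 432 * X 0)^3 - 27*(432*X 0)^3 * X 1) := by
    simp [Δ1, z1, z2, map_sub, map_mul, map_pow, map_one, map_ofNat]
  rw [this]; exact alg_ne' _ (poly_ne' _ (by simp))

set_option synthInstance.maxHeartbeats 400000 in
set_option maxHeartbeats 1000000 in
lemma hΔ2' : Δ2 ≠ 0 := by
  have : Δ2 = algebraMap (MvPolynomial (Fin 2) ℂ) K2 (1 + 27 * X 1) := by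
    simp [Δ2, z2, map_add, map_mul, map_one, map_ofNat]
  rw [this]; exact alg_ne' _ (poly_ne' _ (by simp))

lemma pow_arith' {F : Type*} [Field F] (a b c D : F) (ha : a ≠ 0) (hb : b ≠ 0)
    (g : ℤ) (m n k : ℕ) (hk : k ≤ m) :
    b ^ k * a ^ (m - k) * (-(a ^ 3 * c) / b ^ 3) ^ n * (D * a ^ 3 / b ^ 3) ^ (-(2 * g - 2)) =
      (-1 : F) ^ n * a ^ ((m : ℤ) - k + 3 * n - 6 * g + 6) *
        b ^ ((k : ℤ) - 3 * n + 6 * g - 6) * c ^ n * D ^ (-(2 * g - 2)) := by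
  have ea : ((m : ℤ) - k + 3 * n - 6 * g + 6)
      = ((m - k : ℕ) : ℤ) + ((3 * n : ℕ) : ℤ) + 3 * (-(2 * g - 2)) := by push_cast; omega
  have eb : ((k : ℤ) - 3 * n + 6 * g - 6)
      = ((k : ℕ) : ℤ) + (-((3 * n : ℕ) : ℤ)) + (-(3 * (-(2 * g - 2)))) := by push_cast; omega
  have L1 : (-(a ^ 3 * c) / b ^ 3 : F) ^ n = (-1) ^ n * (a ^ (3 * n) * c ^ n / b ^ (3 * n)) := by
    rw [neg_div, neg_pow, div_pow, mul_pow, ← pow_mul, ← pow_mul]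
  have key : ∀ x : F, (x ^ (3 : ℕ)) ^ (-(2 * g - 2)) = x ^ (3 * (-(2 * g - 2))) := by
    intro x
    rw [← zpow_natCast x 3, ← zpow_mul]
    norm_num
  have L2 : (D * a ^ 3 / b ^ 3 : F) ^ (-(2 * g - 2))
      = D ^ (-(2 * g - 2)) * a ^ (3 * (-(2 * g - 2))) / b ^ (3 * (-(2 * g - 2))) := by
    rw [div_zpow, mul_zpow, key, key]
  have Ra : a ^ ((m : ℤ) - k + 3 * n - 6 * g + 6)
      = a ^ (m - k) * a ^ (3 * n) * a ^ (3 * (-(2 * g - 2))) := by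
    rw [ea, zpow_add₀ ha, zpow_add₀ ha, zpow_natCast, zpow_natCast]
  have Rb : b ^ ((k : ℤ) - 3 * n + 6 * g - 6)
      = b ^ k * (b ^ (3 * n))⁻¹ * (b ^ (3 * (-(2 * g - 2))))⁻¹ := by
    rw [eb, zpow_add₀ hb, zpow_add₀ hb, zpow_neg, zpow_neg, zpow_natCast, zpow_natCast]
  rw [L1, L2, Ra, Rb]
  have hb3n : (b : F) ^ (3 * n) ≠ 0 := pow_ne_zero _ hb
  have hbe : (b : F) ^ (3 * (-(2 * g - 2))) ≠ 0 := zpow_ne_zero _ hb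
  field_simp


/-- The involution transformation of the basic rational functions:
`ι( z₁^k (1/432−z₁)^{m−k} z₂^n (Δ₁Δ₂)^{−(2g−2)} )
  = (−1)^n z₁^{m−k+3n−6g+6} (1/432−z₁)^{k−3n+6g−6} z₂^n (Δ₁Δ₂)^{−(2g−2)}`,
with (possibly negative) integer exponents taken in the field `ℂ(z₁,z₂)`. -/

theorem involution_on_basis (ι : K2 →ₐ[ℂ] K2)
    (h1 : ι z1 = 1 / 432 - z1)
    (h2 : ι z2 = -((432 * z1) ^ 3 * z2) / (1 - 432 * z1) ^ 3) :
    ∀ (g : ℤ) (m n k : ℕ), k ≤ m →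
      ι (z1 ^ k * (1 / 432 - z1) ^ (m - k) * z2 ^ n * (Δ1 * Δ2) ^ (-(2 * g - 2))) =
        (-1 : K2) ^ n * z1 ^ ((m : ℤ) - k + 3 * n - 6 * g + 6) *
          (1 / 432 - z1) ^ ((k : ℤ) - 3 * n + 6 * g - 6) * z2 ^ n *
          (Δ1 * Δ2) ^ (-(2 * g - 2)) := by
  have h432 : (1 : K2) - 432 * z1 = 432 * (1/432 - z1) := by rw [mul_sub]; norm_num
  have hb := hbne'
  have hs := h1sub'
  have hιb : ι ((1:K2)/432 - z1) = z1 := by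
    rw [map_sub, map_div₀, map_one, map_ofNat, h1]; ring
  have hιz2 : ι z2 = -(z1 ^ 3 * z2) / (1/432 - z1) ^ 3 := by
    rw [h2, h432]
    field_simp
  have e1 : (1:K2) - 432 * (1/432 - z1) = 432 * z1 := by rw [mul_sub]; norm_num
  have hι1 : ι Δ1 = (432 * z1) ^ 3 * Δ2 := by
    have : ι Δ1 = (1 - 432 * ι z1) ^ 3 - 27 * (432 * ι z1) ^ 3 * ι z2 := by
      simp [Δ1, map_sub, map_mul, map_pow, map_one, map_ofNat]
    rw [this, h1, e1, h2, Δ2]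
    rw [show (432:K2) * (1/432 - z1) = 1 - 432*z1 from h432.symm]
    field_simp
    ring
  have hι2 : ι Δ2 = Δ1 / (1 - 432 * z1) ^ 3 := by
    have : ι Δ2 = 1 + 27 * ι z2 := by
      simp [Δ2, map_add, map_mul, map_one, map_ofNat]
    rw [this, h2, Δ1]
    field_simp <;> ring
  have hιD : ι (Δ1 * Δ2) = Δ1 * Δ2 * z1 ^ 3 / (1/432 - z1) ^ 3 := by
    have hAT : (432 * z1) * (1/432 - z1) = z1 * (1 - 432 * z1) := by rw [h432]; ring
    have h3 : (432 * z1) ^ 3 * (1/432 - z1) ^ 3 = z1 ^ 3 * (1 - 432 * z1) ^ 3 := by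
      rw [← mul_pow, hAT, mul_pow]
    rw [map_mul, hι1, hι2, ← mul_div_assoc,
      div_eq_div_iff (pow_ne_zero _ hs) (pow_ne_zero _ hb)]
    linear_combination (Δ1 * Δ2) * h3
  intro g m n k hk
  simp only [map_mul, map_pow, map_zpow₀, h1, hιb, hιz2, hιD]
  exact pow_arith' z1 (1/432 - z1) z2 (Δ1 * Δ2) hz1' hb g m n k hk

end
end

section
/- For all integers g ≥ 1 and natural numbers m, n, the ℂ-dimension of V₁^{(g,m,n)} equals m − |3n−6g+6| + 1 if m ≥ |3n−6g+6|, and equals 0 if m < |3n−6g+6|. -/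
open MvPolynomial

noncomputable section

/-- `V₀^{(g,m,n)}`: the ℂ-span of `z₁^k (1/432−z₁)^{m−k} z₂^n (Δ₁Δ₂)^{−(2g−2)}` for `0 ≤ k ≤ m`. -/
def V0 (g : ℤ) (m n : ℕ) : Submodule ℂ K2 :=
  Submodule.span ℂ
    {f : K2 | ∃ k : ℕ, k ≤ m ∧
      f = z1 ^ k * (1 / 432 - z1) ^ (m - k) * z2 ^ n * (Δ1 * Δ2) ^ (-(2 * g - 2))}

/-- `V₁^{(g,m,n)} = {f ∈ V₀^{(g,m,n)} : ι(f) ∈ V₀^{(g,m,n)}}`. -/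
def V1 (ι : K2 →ₐ[ℂ] K2) (g : ℤ) (m n : ℕ) : Submodule ℂ K2 :=
  V0 g m n ⊓ (V0 g m n).comap ι.toLinearMap

/-! ### Auxiliary material -/

set_option synthInstance.maxHeartbeats 1000000
set_option maxHeartbeats 4000000

namespace DimV1Aux

/-! #### Generic polynomial lemmas -/

lemma deg_CsubX (c : ℂ) : (Polynomial.C c - Polynomial.X).degree = 1 := by
  rw [show Polynomial.C c - Polynomial.X = -(Polynomial.X - Polynomial.C c) by ring,
    Polynomial.degree_neg, Polynomial.degree_X_sub_C]

lemma natdeg_CsubX (c : ℂ) : (Polynomial.C c - Polynomial.X).natDegree = 1 :=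
  Polynomial.natDegree_eq_of_degree_eq_some (deg_CsubX c)

lemma CsubX_ne (c : ℂ) : (Polynomial.C c - Polynomial.X) ≠ 0 := by
  intro h
  have := deg_CsubX c
  rw [h, Polynomial.degree_zero] at this
  exact absurd this (by simp)

lemma bern_mem_degreeLT (c : ℂ) (m k : ℕ) (hk : k ≤ m) :
    Polynomial.X ^ k * (Polynomial.C c - Polynomial.X) ^ (m - k)
      ∈ Polynomial.degreeLT ℂ (m + 1) := by
  rw [Polynomial.mem_degreeLT]
  have hnat : (Polynomial.X ^ k * (Polynomial.C c - Polynomial.X) ^ (m - k)).natDegree ≤ m := by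
    refine le_trans (Polynomial.natDegree_mul_le) ?_
    simp only [Polynomial.natDegree_pow, Polynomial.natDegree_X, natdeg_CsubX]
    omega
  have := Polynomial.natDegree_le_iff_degree_le.1 hnat
  exact lt_of_le_of_lt this (by exact_mod_cast Nat.lt_succ_self m)

lemma span_bern (c : ℂ) (hc : c ≠ 0) (m : ℕ) :
    Submodule.span ℂ {q : Polynomial ℂ | ∃ k, k ≤ m ∧
        q = Polynomial.X ^ k * (Polynomial.C c - Polynomial.X) ^ (m - k)}
      = Polynomial.degreeLT ℂ (m + 1) := by
  classical
  apply le_antisymm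
  · rw [Submodule.span_le]
    rintro q ⟨k, hk, rfl⟩
    exact bern_mem_degreeLT c m k hk
  · rw [Polynomial.degreeLT_eq_span_X_pow, Submodule.span_le]
    intro q hq
    simp only [Finset.coe_image, Set.mem_image, Finset.mem_coe, Finset.mem_range] at hq
    obtain ⟨j, hj, rfl⟩ := hq
    have hj' : j ≤ m := by omega
    have key : (Polynomial.C (c ^ (m - j)) : Polynomial ℂ) * Polynomial.X ^ j
        = ∑ i ∈ Finset.range (m - j + 1),
            Polynomial.X ^ (j + i) * (Polynomial.C c - Polynomial.X) ^ (m - (j + i))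
              * ((m - j).choose i : Polynomial ℂ) := by
      have h0 : (Polynomial.C (c ^ (m - j)) : Polynomial ℂ)
          = (Polynomial.X + (Polynomial.C c - Polynomial.X)) ^ (m - j) := by
        rw [map_pow]; ring
      rw [h0, add_pow, Finset.sum_mul]
      apply Finset.sum_congr rfl
      intro i hi
      rw [Nat.sub_sub]
      ring
    have hX : (Polynomial.X : Polynomial ℂ) ^ j
        = (c ^ (m - j))⁻¹ • ((Polynomial.C (c ^ (m - j)) : Polynomial ℂ) * Polynomial.X ^ j) := by
      rw [Polynomial.smul_eq_C_mul, ← mul_assoc, ← map_mul,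
        inv_mul_cancel₀ (pow_ne_zero _ hc), map_one, one_mul]
    rw [SetLike.mem_coe, hX, key]
    refine Submodule.smul_mem _ _ (Submodule.sum_mem _ ?_)
    intro i hi
    simp only [Finset.mem_range] at hi
    have hterm : Polynomial.X ^ (j + i) * (Polynomial.C c - Polynomial.X) ^ (m - (j + i))
          * ((m - j).choose i : Polynomial ℂ)
        = (((m - j).choose i : ℂ)) •
          (Polynomial.X ^ (j + i) * (Polynomial.C c - Polynomial.X) ^ (m - (j + i))) := by
      rw [Polynomial.smul_eq_C_mul, Polynomial.C_eq_natCast]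
      ring
    rw [hterm]
    exact Submodule.smul_mem _ _ (Submodule.subset_span ⟨j + i, by omega, rfl⟩)

lemma key_dvd {x y : Polynomial ℂ} (hx : x ≠ 0) (hy : y ≠ 0) (hcop : IsCoprime x y)
    (α P n : ℕ) (p q : Polynomial ℂ)
    (h : (-1)^n * (x^(α+P) * y^α * p) = q * (y^(α+P) * x^α)) : y^P ∣ p := by
  have h1 : (x^α*y^α) * ((-1)^n * (x^P * p)) = (x^α*y^α) * (q * y^P) := by
    rw [pow_add, pow_add] at h; linear_combination h
  have h2 := mul_left_cancel₀ (mul_ne_zero (pow_ne_zero α hx) (pow_ne_zero α hy)) h1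
  have h3 : x^P * p = y^P * ((-1)^n * q) := by
    have h4 := congrArg (fun z => (-1:Polynomial ℂ)^n * z) h2
    simp only [← mul_assoc, ← mul_pow, neg_mul_neg, one_mul] at h4
    rw [one_pow, one_mul] at h4
    linear_combination h4
  exact (hcop.symm.pow).dvd_of_dvd_mul_left ⟨(-1)^n * q, by linear_combination h3⟩

lemma factor_degreeLT {t p : Polynomial ℂ} (ht : t ≠ 0) {N : ℕ}
    (hp : p ∈ Polynomial.degreeLT ℂ N) (hdvd : t ∣ p) :
    ∃ r ∈ Polynomial.degreeLT ℂ (N - t.natDegree), p = t * r := by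
  obtain ⟨r, rfl⟩ := hdvd
  rcases eq_or_ne r 0 with rfl | hr
  · refine ⟨0, ?_, by simp⟩
    rw [Polynomial.mem_degreeLT, Polynomial.degree_zero]
    exact WithBot.bot_lt_coe _
  · refine ⟨r, ?_, rfl⟩
    rw [Polynomial.mem_degreeLT] at hp ⊢
    have h1 : (t*r).natDegree = t.natDegree + r.natDegree := Polynomial.natDegree_mul ht hr
    have h2 : (t*r).natDegree < N := (Polynomial.natDegree_lt_iff_degree_lt (mul_ne_zero ht hr)).2 hp
    exact (Polynomial.natDegree_lt_iff_degree_lt hr).1 (by omega)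

lemma mul_mem_degreeLT {t : Polynomial ℂ} (ht : t ≠ 0) {N : ℕ} {r : Polynomial ℂ}
    (hr : r ∈ Polynomial.degreeLT ℂ (N - t.natDegree)) :
    t * r ∈ Polynomial.degreeLT ℂ N := by
  rcases eq_or_ne r 0 with rfl | hr0
  · rw [mul_zero, Polynomial.mem_degreeLT, Polynomial.degree_zero]
    exact WithBot.bot_lt_coe _
  · rw [Polynomial.mem_degreeLT] at hr ⊢
    have h1 := (Polynomial.natDegree_lt_iff_degree_lt hr0).2 hr
    have h2 : (t*r).natDegree = t.natDegree + r.natDegree := Polynomial.natDegree_mul ht hr0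
    exact (Polynomial.natDegree_lt_iff_degree_lt (mul_ne_zero ht hr0)).1 (by omega)

/-! #### Facts about `K2` -/

abbrev A2 := MvPolynomial (Fin 2) ℂ
abbrev φ2 : A2 →+* K2 := algebraMap A2 K2

lemma phi_inj : Function.Injective φ2 := IsFractionRing.injective _ _

lemma ne_of_eval {p : A2} (h : eval (fun _ => (0:ℂ)) p ≠ 0) : φ2 p ≠ 0 := by
  intro hp
  apply h
  have : p = 0 := phi_inj (by simpa using hp)
  simp [this]

lemma t_ne : (1 - 432 * z1 : K2) ≠ 0 := by
  have : (1 - 432 * z1 : K2) = φ2 (1 - 432 * X 0) := by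
    simp [z1, map_ofNat]
  rw [this]
  apply ne_of_eval
  simp

lemma D1_ne : Δ1 ≠ 0 := by
  have : Δ1 = φ2 ((1 - 432 * X 0) ^ 3 - 27 * (432 * X 0) ^ 3 * X 1) := by
    simp [Δ1, z1, z2, map_ofNat]
  rw [this]
  apply ne_of_eval
  simp

lemma D2_ne : Δ2 ≠ 0 := by
  have : Δ2 = φ2 (1 + 27 * X 1) := by simp [Δ2, z2, map_ofNat]
  rw [this]; apply ne_of_eval; simp

lemma v_ne : (1 / 432 - z1 : K2) ≠ 0 := by
  intro h
  apply t_ne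
  have : (1 - 432 * z1 : K2) = 432 * (1/432 - z1) := by ring
  rw [this, h, mul_zero]

lemma z1_ne : z1 ≠ 0 := by
  simp [z1, map_ne_zero_iff _ phi_inj, MvPolynomial.X_ne_zero]

lemma z2_ne : z2 ≠ 0 := by
  simp [z2, map_ne_zero_iff _ phi_inj, MvPolynomial.X_ne_zero]

lemma c432_ne : (432 : K2) ≠ 0 := by
  have : (432 : K2) = φ2 432 := (map_ofNat _ 432).symm
  rw [this]; apply ne_of_eval
  rw [map_ofNat]
  norm_num

lemma z1_transcendental : Transcendental ℂ z1 := by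
  have h := MvPolynomial.transcendental_X ℂ (0 : Fin 2)
  rw [transcendental_iff_injective] at h ⊢
  have heq : (Polynomial.aeval z1 : Polynomial ℂ →ₐ[ℂ] K2) =
      ((IsScalarTower.toAlgHom ℂ (MvPolynomial (Fin 2) ℂ) K2).comp
        (Polynomial.aeval (X 0 : MvPolynomial (Fin 2) ℂ))) := by
    apply Polynomial.algHom_ext
    simp [z1]
  rw [heq]
  exact (IsFractionRing.injective (MvPolynomial (Fin 2) ℂ) K2).comp h

lemma aeval_z1_inj : Function.Injective (Polynomial.aeval z1 : Polynomial ℂ →ₐ[ℂ] K2) :=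
  transcendental_iff_injective.1 z1_transcendental

/-! #### The constant `1/432` and the substitution `σ` -/

def cc : ℂ := 1/432

lemma cc_ne : cc ≠ 0 := by norm_num [cc]

lemma hval : algebraMap ℂ K2 cc = 1/432 := by
  unfold cc
  rw [map_div₀, map_one, map_ofNat]

lemma hv_aeval : Polynomial.aeval z1 (Polynomial.C cc - Polynomial.X) = 1/432 - z1 := by
  rw [map_sub, Polynomial.aeval_C, Polynomial.aeval_X, hval]

def sg : Polynomial ℂ →ₐ[ℂ] Polynomial ℂ :=
  Polynomial.aeval (Polynomial.C cc - Polynomial.X)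

lemma hsg_flip : sg (Polynomial.C cc - Polynomial.X) = Polynomial.X := by
  unfold sg
  rw [map_sub, Polynomial.aeval_C, Polynomial.aeval_X, Polynomial.algebraMap_eq]
  ring

lemma hsgsg : ∀ r, sg (sg r) = r := by
  intro r
  have h5 : (Polynomial.aeval (sg (Polynomial.C cc - Polynomial.X)) : Polynomial ℂ →ₐ[ℂ] Polynomial ℂ)
      = sg.comp sg := Polynomial.aeval_algHom sg _
  rw [hsg_flip] at h5
  calc sg (sg r) = (sg.comp sg) r := rfl
    _ = Polynomial.aeval Polynomial.X r := by rw [← h5]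
    _ = r := Polynomial.aeval_X_left_apply r

lemma sg_comp_eq : ∀ r : Polynomial ℂ, sg r = r.comp (Polynomial.C cc - Polynomial.X) := by
  intro r
  simp [sg, Polynomial.comp, Polynomial.aeval_def, Polynomial.algebraMap_eq]

lemma sg_mem_degreeLT {N : ℕ} {r : Polynomial ℂ} (hr : r ∈ Polynomial.degreeLT ℂ N) :
    sg r ∈ Polynomial.degreeLT ℂ N := by
  rcases eq_or_ne r 0 with rfl | hr0
  · simpa using hr
  · rw [Polynomial.mem_degreeLT] at hr ⊢
    have hdeg : (sg r).natDegree = r.natDegree := by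
      rw [sg_comp_eq, Polynomial.natDegree_comp, natdeg_CsubX, mul_one]
    have hne : sg r ≠ 0 := by
      intro h0
      apply hr0
      have := hsgsg r
      rw [h0, map_zero] at this
      exact this.symm
    exact (Polynomial.natDegree_lt_iff_degree_lt hne).1
      (hdeg ▸ (Polynomial.natDegree_lt_iff_degree_lt hr0).2 hr)

lemma hcop : IsCoprime (Polynomial.X : Polynomial ℂ) (Polynomial.C cc - Polynomial.X) := by
  refine ⟨Polynomial.C cc⁻¹, Polynomial.C cc⁻¹, ?_⟩
  have h : (Polynomial.C (cc⁻¹) * Polynomial.X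
      + Polynomial.C (cc⁻¹) * (Polynomial.C cc - Polynomial.X)) = Polynomial.C (cc⁻¹ * cc) := by
    rw [map_mul]; ring
  rw [h, inv_mul_cancel₀ cc_ne, map_one]

end DimV1Aux

open DimV1Aux in
/-- The dimension of `V₁^{(g,m,n)}` equals `m − |3n−6g+6| + 1` if `m ≥ |3n−6g+6|`,
and `0` otherwise. -/
theorem dim_V1 (ι : K2 →ₐ[ℂ] K2)
    (h1 : ι z1 = 1 / 432 - z1)
    (h2 : ι z2 = -((432 * z1) ^ 3 * z2) / (1 - 432 * z1) ^ 3)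
    (g : ℤ) (hg : 1 ≤ g) (m n : ℕ) :
    Module.finrank ℂ (V1 ι g m n) =
      if (3 * (n : ℤ) - 6 * g + 6).natAbs ≤ m then
        m - (3 * (n : ℤ) - 6 * g + 6).natAbs + 1
      else 0 := by
  classical
  have ht0 : (1 - 432 * z1 : K2) ≠ 0 := t_ne
  -- basic identities for ι
  have hιΔ1 : ι Δ1 = (432*z1)^3 * Δ2 := by
    simp only [Δ1, Δ2, map_sub, map_mul, map_pow, map_one, map_ofNat, h1, h2]
    field_simp
    ring
  have hιΔ2 : ι Δ2 * (1 - 432*z1)^3 = Δ1 := by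
    simp only [Δ2, Δ1, map_add, map_mul, map_one, map_ofNat, h2]
    field_simp
    ring
  have hιz2 : ι z2 * (1-432*z1)^3 = -((432*z1)^3 * z2) := by
    rw [h2]; field_simp
  -- integer bookkeeping
  obtain ⟨a, ha⟩ : ∃ a : ℕ, (a:ℤ) = 2*g-2 := ⟨(2*g-2).toNat, Int.toNat_of_nonneg (by omega)⟩
  set D : ℤ := 3*(n:ℤ) - 6*g + 6 with hD_def
  set P : ℕ := D.toNat with hP_def
  set Q : ℕ := (-D).toNat with hQ_def
  have hPQa : P + 3*a = Q + 3*n := by omega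
  have hPQ0 : P = 0 ∨ Q = 0 := by omega
  have hDabs : D.natAbs = P + Q := by omega
  -- the weight w
  set v : K2 := 1/432 - z1 with hv_def
  set w : K2 := z2^n * ((Δ1*Δ2)^a)⁻¹ with hw_def
  have hw : w ≠ 0 := mul_ne_zero (pow_ne_zero _ z2_ne)
    (inv_ne_zero (pow_ne_zero _ (mul_ne_zero D1_ne D2_ne)))
  have hw_eq : (Δ1*Δ2 : K2)^(-(2*g-2)) = ((Δ1*Δ2)^a)⁻¹ := by
    rw [← ha, zpow_neg, zpow_natCast]
  -- key field identities
  have hA : (ι Δ1 * ι Δ2)^a * (1-432*z1)^(3*a) = (432*z1)^(3*a) * (Δ1*Δ2)^a := by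
    rw [pow_mul, pow_mul, ← mul_pow, ← mul_pow]
    congr 1
    rw [mul_assoc, hιΔ2, hιΔ1]
    ring
  have hB : (ι z2)^n * (1-432*z1)^(3*n) = (-1)^n * ((432*z1)^(3*n) * z2^n) := by
    rw [pow_mul (1-432*z1), ← mul_pow, hιz2, pow_mul (432*z1)]
    rw [show (-(((432*z1):K2)^3 * z2)) = (-1) * (((432*z1)^3) * z2) from by ring, mul_pow, mul_pow]
  have hYne : ((Δ1*Δ2 : K2)^a) ≠ 0 := pow_ne_zero _ (mul_ne_zero D1_ne D2_ne)
  have hXe : (ι Δ1 * ι Δ2)^a ≠ 0 := by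
    intro h0
    rw [h0, zero_mul] at hA
    exact (mul_ne_zero (pow_ne_zero _ (mul_ne_zero c432_ne z1_ne)) hYne) hA.symm
  have hinv : ((ι Δ1 * ι Δ2)^a)⁻¹ * (432*z1)^(3*a) = (1-432*z1)^(3*a) * ((Δ1*Δ2)^a)⁻¹ := by
    field_simp
    first
      | linear_combination hA
      | linear_combination -hA
      | linear_combination hA.symm
  have hw1 : ι w = (ι z2)^n * ((ι Δ1 * ι Δ2)^a)⁻¹ := by
    rw [hw_def]
    simp only [map_mul, map_pow, map_inv₀]
  have hW : ι w * ((1-432*z1)^(3*n) * (432*z1)^(3*a))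
      = (-1)^n * ((432*z1)^(3*n) * (1-432*z1)^(3*a) * w) := by
    calc ι w * ((1-432*z1)^(3*n) * (432*z1)^(3*a))
        = ((ι z2)^n * (1-432*z1)^(3*n)) * (((ι Δ1 * ι Δ2)^a)⁻¹ * (432*z1)^(3*a)) := by
          rw [hw1]; ring
      _ = ((-1)^n * ((432*z1)^(3*n) * z2^n)) * ((1-432*z1)^(3*a) * ((Δ1*Δ2)^a)⁻¹) := by
          rw [hB, hinv]
      _ = (-1)^n * ((432*z1)^(3*n) * (1-432*z1)^(3*a) * w) := by rw [hw_def]; ring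
  have ht432 : (1 - 432*z1 : K2) = 432 * v := by rw [hv_def]; ring
  have hWv : ι w * (v^(3*n) * z1^(3*a)) = (-1)^n * (z1^(3*n) * v^(3*a) * w) := by
    have h13 : (432:K2)^(3*n+3*a) * (ι w * (v^(3*n) * z1^(3*a)))
        = (432:K2)^(3*n+3*a) * ((-1)^n * (z1^(3*n) * v^(3*a) * w)) := by
      calc (432:K2)^(3*n+3*a) * (ι w * (v^(3*n) * z1^(3*a)))
          = ι w * ((432*v)^(3*n) * (432*z1)^(3*a)) := by
            rw [mul_pow, mul_pow, pow_add]; ring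
        _ = ι w * ((1-432*z1)^(3*n) * (432*z1)^(3*a)) := by rw [← ht432]
        _ = (-1)^n * ((432*z1)^(3*n) * (1-432*z1)^(3*a) * w) := hW
        _ = (-1)^n * ((432*z1)^(3*n) * (432*v)^(3*a) * w) := by rw [← ht432]
        _ = (432:K2)^(3*n+3*a) * ((-1)^n * (z1^(3*n) * v^(3*a) * w)) := by
            rw [mul_pow, mul_pow, pow_add]; ring
    exact mul_left_cancel₀ (pow_ne_zero _ c432_ne) h13
  have hvne : v ≠ 0 := by rw [hv_def]; exact v_ne
  have hz1ne : z1 ≠ 0 := z1_ne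
  have hstar : ι w * (v^P * z1^Q) = (-1)^n * (z1^P * v^Q * w) := by
    have h14 : (ι w * (v^P * z1^Q)) * (v^(3*n) * z1^(3*a))
        = ((-1)^n * (z1^P * v^Q * w)) * (v^(3*n) * z1^(3*a)) := by
      calc (ι w * (v^P * z1^Q)) * (v^(3*n) * z1^(3*a))
          = (ι w * (v^(3*n) * z1^(3*a))) * (v^P * z1^Q) := by ring
        _ = ((-1)^n * (z1^(3*n) * v^(3*a) * w)) * (v^P * z1^Q) := by rw [hWv]
        _ = (-1)^n * w * (z1^(3*n+Q) * v^(3*a+P)) := by rw [pow_add, pow_add]; ring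
        _ = (-1)^n * w * (z1^(P+3*a) * v^(Q+3*n)) := by
            rw [show 3*n+Q = P+3*a from by omega, show 3*a+P = Q+3*n from by omega]
        _ = ((-1)^n * (z1^P * v^Q * w)) * (v^(3*n) * z1^(3*a)) := by
            rw [pow_add, pow_add]; ring
    exact mul_right_cancel₀ (mul_ne_zero (pow_ne_zero _ hvne) (pow_ne_zero _ hz1ne)) h14
  -- the linear maps L and T
  set L : Polynomial ℂ →ₗ[ℂ] K2
    := (LinearMap.mulLeft ℂ w).comp (Polynomial.aeval z1).toLinearMap with hL_def
  have hL : ∀ p, L p = w * Polynomial.aeval z1 p := fun p => rfl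
  have hLinj : Function.Injective L := by
    intro p q h
    apply aeval_z1_inj
    exact mul_left_cancel₀ hw (by rw [← hL p, ← hL q, h])
  set t : Polynomial ℂ := Polynomial.X^P * (Polynomial.C cc - Polynomial.X)^Q with ht_def
  have ht : t ≠ 0 := mul_ne_zero (pow_ne_zero _ Polynomial.X_ne_zero)
    (pow_ne_zero _ (CsubX_ne cc))
  have htdeg : t.natDegree = P + Q := by
    rw [ht_def, Polynomial.natDegree_mul (pow_ne_zero _ Polynomial.X_ne_zero)
      (pow_ne_zero _ (CsubX_ne cc)), Polynomial.natDegree_pow, Polynomial.natDegree_pow,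
      Polynomial.natDegree_X, natdeg_CsubX, mul_one, mul_one]
  set T : Polynomial ℂ →ₗ[ℂ] Polynomial ℂ := LinearMap.mulLeft ℂ t with hT_def
  have hT : ∀ r, T r = t * r := fun r => rfl
  have hTinj : Function.Injective T := by
    intro p q h
    rw [hT p, hT q] at h
    exact mul_left_cancel₀ ht h
  -- identification of V0
  have hv_aeval' : Polynomial.aeval z1 (Polynomial.C cc - Polynomial.X) = v := by
    rw [hv_aeval, hv_def]
  have hgen : ∀ k : ℕ, L (Polynomial.X ^ k * (Polynomial.C cc - Polynomial.X) ^ (m - k))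
      = z1 ^ k * v ^ (m-k) * z2^n * (Δ1*Δ2)^(-(2*g-2)) := by
    intro k
    rw [hL, hw_eq]
    simp only [map_mul, map_pow, hv_aeval', Polynomial.aeval_X]
    rw [hw_def]
    ring
  have hV0 : V0 g m n = Submodule.map L (Polynomial.degreeLT ℂ (m+1)) := by
    have h0 : V0 g m n = Submodule.span ℂ
        {f : K2 | ∃ k, k ≤ m ∧ f = z1^k * v^(m-k) * z2^n * (Δ1*Δ2)^(-(2*g-2))} := rfl
    have himg : {f : K2 | ∃ k, k ≤ m ∧ f = z1^k * v^(m-k) * z2^n * (Δ1*Δ2)^(-(2*g-2))}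
        = ⇑L '' {q : Polynomial ℂ | ∃ k, k ≤ m ∧
            q = Polynomial.X^k * (Polynomial.C cc - Polynomial.X)^(m-k)} := by
      ext f
      constructor
      · rintro ⟨k, hk, rfl⟩
        exact ⟨_, ⟨k, hk, rfl⟩, hgen k⟩
      · rintro ⟨q, ⟨k, hk, rfl⟩, rfl⟩
        exact ⟨k, hk, hgen k⟩
    rw [h0, himg, ← Submodule.map_span, span_bern cc cc_ne m]
  -- ι composed with L
  have hιaeval : ∀ p : Polynomial ℂ,
      ι (Polynomial.aeval z1 p) = Polynomial.aeval z1 (sg p) := by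
    intro p
    have h5 := Polynomial.aeval_algHom (Polynomial.aeval z1 : Polynomial ℂ →ₐ[ℂ] K2)
      (Polynomial.C cc - Polynomial.X)
    rw [hv_aeval'] at h5
    rw [← Polynomial.aeval_algHom_apply ι z1 p, h1, h5]
    rfl
  have hιL : ∀ p, ι (L p) = ι w * Polynomial.aeval z1 (sg p) := by
    intro p
    rw [hL, map_mul, hιaeval]
  have hsgt : sg t = (Polynomial.C cc - Polynomial.X)^P * Polynomial.X^Q := by
    rw [ht_def, map_mul, map_pow, map_pow, hsg_flip,
      show sg Polynomial.X = Polynomial.C cc - Polynomial.X from Polynomial.aeval_X _]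
  -- the main identification of V1
  have hmain : V1 ι g m n
      = Submodule.map L (Submodule.map T (Polynomial.degreeLT ℂ (m+1-(P+Q)))) := by
    apply le_antisymm
    · intro f hf
      have hf' : f ∈ V0 g m n ⊓ (V0 g m n).comap ι.toLinearMap := hf
      obtain ⟨hf0, hf1⟩ := Submodule.mem_inf.1 hf'
      rw [hV0, Submodule.mem_map] at hf0
      obtain ⟨p, hp, rfl⟩ := hf0
      have hf1' : ι (L p) ∈ V0 g m n := hf1
      rw [hV0, Submodule.mem_map] at hf1'
      obtain ⟨q, hq, hLq⟩ := hf1'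
      have hLq' : w * Polynomial.aeval z1 q = ι w * Polynomial.aeval z1 (sg p) := by
        rw [← hL, hLq, hιL]
      have h9 : w * (Polynomial.aeval z1 q * (v^(3*n) * z1^(3*a)))
          = w * ((-1)^n * (z1^(3*n) * v^(3*a) * Polynomial.aeval z1 (sg p))) := by
        calc w * (Polynomial.aeval z1 q * (v^(3*n) * z1^(3*a)))
            = (w * Polynomial.aeval z1 q) * (v^(3*n) * z1^(3*a)) := by ring
          _ = (ι w * Polynomial.aeval z1 (sg p)) * (v^(3*n) * z1^(3*a)) := by rw [hLq']
          _ = (ι w * (v^(3*n) * z1^(3*a))) * Polynomial.aeval z1 (sg p) := by ring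
          _ = ((-1)^n * (z1^(3*n) * v^(3*a) * w)) * Polynomial.aeval z1 (sg p) := by rw [hWv]
          _ = w * ((-1)^n * (z1^(3*n) * v^(3*a) * Polynomial.aeval z1 (sg p))) := by ring
      have h10 := mul_left_cancel₀ hw h9
      have h11 : q * ((Polynomial.C cc - Polynomial.X)^(3*n) * Polynomial.X^(3*a))
          = (-1)^n * (Polynomial.X^(3*n) * (Polynomial.C cc - Polynomial.X)^(3*a) * sg p) := by
        apply aeval_z1_inj
        simp only [map_mul, map_pow, map_neg, map_one, hv_aeval', Polynomial.aeval_X]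
        linear_combination h10
      have hdvd : sg t ∣ sg p := by
        rcases hPQ0 with hP0 | hQ0
        · rw [show 3*a = 3*n+Q from by omega] at h11
          have hh : (-1:Polynomial ℂ)^n * ((Polynomial.C cc - Polynomial.X)^(3*n+Q)
                * Polynomial.X^(3*n) * sg p)
              = q * (Polynomial.X^(3*n+Q) * (Polynomial.C cc - Polynomial.X)^(3*n)) := by
            linear_combination -h11
          have hres := key_dvd (CsubX_ne cc) Polynomial.X_ne_zero hcop.symm (3*n) Q n (sg p) q hh
          rw [hsgt, hP0, pow_zero, one_mul]
          exact hres
        · rw [show 3*n = 3*a+P from by omega] at h11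
          have hh : (-1:Polynomial ℂ)^n * (Polynomial.X^(3*a+P)
                * (Polynomial.C cc - Polynomial.X)^(3*a) * sg p)
              = q * ((Polynomial.C cc - Polynomial.X)^(3*a+P) * Polynomial.X^(3*a)) := by
            linear_combination -h11
          have hres := key_dvd Polynomial.X_ne_zero (CsubX_ne cc) hcop (3*a) P n (sg p) q hh
          rw [hsgt, hQ0, pow_zero, mul_one]
          exact hres
      have hdvd' : t ∣ p := by
        have h12 := map_dvd sg hdvd
        rw [hsgsg, hsgsg] at h12
        exact h12
      obtain ⟨r, hr, hpr⟩ := factor_degreeLT ht hp hdvd'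
      rw [htdeg] at hr
      subst hpr
      exact Submodule.mem_map.2 ⟨t * r, Submodule.mem_map.2 ⟨r, hr, hT r⟩, rfl⟩
    · intro f hf
      rw [Submodule.mem_map] at hf
      obtain ⟨s, hs, rfl⟩ := hf
      rw [Submodule.mem_map] at hs
      obtain ⟨r, hr, rfl⟩ := hs
      have hsr : sg r ∈ Polynomial.degreeLT ℂ (m+1-(P+Q)) := sg_mem_degreeLT hr
      have htr : t * r ∈ Polynomial.degreeLT ℂ (m+1) := by
        apply mul_mem_degreeLT ht
        rw [htdeg]
        exact hr
      have htsr : t * sg r ∈ Polynomial.degreeLT ℂ (m+1) := by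
        apply mul_mem_degreeLT ht
        rw [htdeg]
        exact hsr
      have hcalc : ι (L (T r)) = ((-1:ℂ)^n) • (L (t * sg r)) := by
        have hsc : ((-1:ℂ)^n) • (w * Polynomial.aeval z1 (t * sg r))
            = (-1:K2)^n * (w * Polynomial.aeval z1 (t * sg r)) := by
          rw [← algebraMap_smul K2 ((-1:ℂ)^n) (w * Polynomial.aeval z1 (t * sg r)),
            smul_eq_mul, map_pow, map_neg, map_one]
        rw [hT, hιL, show sg (t * r) = sg t * sg r from map_mul sg t r, hsgt, hL, hsc]
        simp only [ht_def, map_mul, map_pow, hv_aeval', Polynomial.aeval_X]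
        linear_combination (Polynomial.aeval z1 (sg r)) * hstar
      show L (T r) ∈ V0 g m n ⊓ (V0 g m n).comap ι.toLinearMap
      rw [Submodule.mem_inf]
      constructor
      · rw [hV0]
        exact Submodule.mem_map.2 ⟨t * r, htr, (congrArg L (hT r)).symm⟩
      · rw [Submodule.mem_comap]
        have htl : ι.toLinearMap (L (T r)) = ι (L (T r)) := rfl
        rw [htl, hcalc]
        refine Submodule.smul_mem _ _ ?_
        rw [hV0]
        exact Submodule.mem_map.2 ⟨t * sg r, htsr, rfl⟩
  -- final dimension count
  rw [hmain,
    ← (Submodule.equivMapOfInjective L hLinj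
        (Submodule.map T (Polynomial.degreeLT ℂ (m+1-(P+Q))))).finrank_eq,
    ← (Submodule.equivMapOfInjective T hTinj (Polynomial.degreeLT ℂ (m+1-(P+Q)))).finrank_eq,
    (Polynomial.degreeLTEquiv ℂ (m+1-(P+Q))).finrank_eq,
    Module.finrank_fin_fun]
  split_ifs with hcond <;> omega



end
end

section
/- For every N ≥ 1 and every j ≥ 0, the coefficient of q^j in F_N (an element of ℚ[x]) is a polynomial of degree at most j in x. -/
noncomputable section

/-- The truncated product expansion `F_N` of `−φ_{−2,1}(τ,z)/x` in `ℚ[x]⟦q⟧`: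
`F_N = ∏_{m=1}^{N} (1 + (x−2)q^m + q^{2m})² · ∏_{m=1}^{N} (1 − q^m)^{−4}`. -/
def F (N : ℕ) : PowerSeries (Polynomial ℚ) :=
  (∏ m ∈ Finset.Icc 1 N,
      (1 + PowerSeries.C (R := Polynomial ℚ) (Polynomial.X - 2) * PowerSeries.X ^ m
         + PowerSeries.X ^ (2 * m)) ^ 2) *
  Ring.inverse (∏ m ∈ Finset.Icc 1 N, (1 - PowerSeries.X ^ m) ^ 4)

/-!
The power series in `ℚ[x]⟦q⟧` whose `q^j`-coefficient has `x`-degree at most `j` form a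
subring, because in a product the `x`-degrees add exactly as the `q`-exponents do. The factors
`1 + (x−2)q^m + q^{2m}` lie in it since `m ≥ 1`, and `∏ (1 − q^m)^4` comes from `ℚ⟦q⟧`, so its
inverse has constant coefficients.
-/

theorem map_ringInverse {M₀ N₀ H : Type*} [MonoidWithZero M₀] [MonoidWithZero N₀]
    [FunLike H M₀ N₀] [MonoidHomClass H M₀ N₀] (f : H) {a : M₀} (ha : IsUnit a) :
    f (Ring.inverse a) = Ring.inverse (f a) := by
  obtain ⟨u, rfl⟩ := ha
  simpa using (Ring.inverse_unit (Units.map (f : M₀ →* N₀) u)).symm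

namespace PowerSeries

theorem isUnit_one_sub_X_pow {R : Type*} [Ring R] {m : ℕ} (hm : m ≠ 0) :
    IsUnit (1 - X ^ m : R⟦X⟧) := by
  simp [isUnit_iff_constantCoeff, zero_pow hm]

variable (R : Type*) [Ring R]

def coeffDegreeLE : Subring (Polynomial R)⟦X⟧ where
  carrier := {f | ∀ j, (coeff j f).degree ≤ j}
  one_mem' j := by
    rw [coeff_one]
    split_ifs with hj
    · exact hj ▸ Polynomial.degree_one_le
    · simp
  zero_mem' j := by simp
  add_mem' {f g} hf hg j := by
    rw [map_add]
    exact (Polynomial.degree_add_le _ _).trans (max_le (hf j) (hg j))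
  neg_mem' {f} hf j := by
    rw [map_neg, Polynomial.degree_neg]
    exact hf j
  mul_mem' {f g} hf hg j := by
    rw [coeff_mul]
    refine (Polynomial.degree_sum_le _ _).trans (Finset.sup_le fun p hp => ?_)
    rw [← Finset.HasAntidiagonal.mem_antidiagonal.mp hp, Nat.cast_add]
    exact (Polynomial.degree_mul_le _ _).trans (add_le_add (hf p.1) (hg p.2))

variable {R}

theorem mem_coeffDegreeLE {f : (Polynomial R)⟦X⟧} :
    f ∈ coeffDegreeLE R ↔ ∀ j, (coeff j f).degree ≤ j :=
  Iff.rfl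

theorem map_C_mem_coeffDegreeLE (f : R⟦X⟧) : map Polynomial.C f ∈ coeffDegreeLE R := by
  refine mem_coeffDegreeLE.mpr fun j => ?_
  rw [coeff_map]
  exact Polynomial.degree_C_le.trans (WithBot.coe_le_coe.mpr j.zero_le)

theorem X_mem_coeffDegreeLE : (X : (Polynomial R)⟦X⟧) ∈ coeffDegreeLE R := by
  simpa using map_C_mem_coeffDegreeLE (R := R) X

theorem C_mul_X_pow_mem_coeffDegreeLE {p : Polynomial R} {m : ℕ} (hp : p.degree ≤ m) :
    C p * X ^ m ∈ coeffDegreeLE R := by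
  refine mem_coeffDegreeLE.mpr fun j => ?_
  rw [coeff_C_mul_X_pow]
  split_ifs with hj
  · exact hj ▸ hp
  · simp

end PowerSeries

open PowerSeries in
theorem coeff_F_degree_le_general (N : ℕ) (j : ℕ) :
    (PowerSeries.coeff (R := Polynomial ℚ) j (F N)).degree ≤ (j : WithBot ℕ) := by
  suffices F N ∈ coeffDegreeLE ℚ from mem_coeffDegreeLE.mp this j
  have hfactor (m : ℕ) (hm : m ∈ Finset.Icc 1 N) :
      1 + C (Polynomial.X - 2) * X ^ m + X ^ (2 * m) ∈ coeffDegreeLE ℚ := by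
    refine add_mem (add_mem (one_mem _) (C_mul_X_pow_mem_coeffDegreeLE ?_))
      (pow_mem X_mem_coeffDegreeLE _)
    compute_degree
    exact_mod_cast (Finset.mem_Icc.mp hm).1
  have hden : (∏ m ∈ Finset.Icc 1 N, (1 - X ^ m) ^ 4 : (Polynomial ℚ)⟦X⟧) =
      map Polynomial.C (∏ m ∈ Finset.Icc 1 N, (1 - X ^ m) ^ 4) := by
    simp
  have hunit : IsUnit (∏ m ∈ Finset.Icc 1 N, (1 - X ^ m) ^ 4 : ℚ⟦X⟧) :=
    IsUnit.prod_iff.mpr fun m hm => (isUnit_one_sub_X_pow (by grind)).pow 4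
  rw [F]
  refine mul_mem (prod_mem fun m hm => pow_mem (hfactor m hm) 2) ?_
  rw [hden, ← map_ringInverse _ hunit]
  exact map_C_mem_coeffDegreeLE _

/-- For every `N ≥ 1` and every `j ≥ 0`, the coefficient of `q^j` in `F_N` is a polynomial
of degree at most `j` in `x`. -/
theorem coeff_F_degree_le (N : ℕ) (hN : 1 ≤ N) (j : ℕ) :
    (PowerSeries.coeff (R := Polynomial ℚ) j (F N)).degree ≤ (j : WithBot ℕ) :=
  coeff_F_degree_le_general N j

end
end

section
/- For every natural number k and every P ∈ R weighted homogeneous of weight k (for the weights 2, 4, 6 on X₂, X₄, X₆), one has ∂(D(P)) = D(∂(P)) + (k/12)·P. -/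
open MvPolynomial

noncomputable section

/-!
`⁅∂, D⁆` is again a derivation, so it is determined by its values on the generators. Since
`∂ Xᵢ` is a constant, `⁅∂, D⁆ Xᵢ = ∂ (D Xᵢ)`, which the Ramanujan identities make equal to
`(wᵢ / 12) Xᵢ` for the weights `w = (2, 4, 6)`. Hence `⁅∂, D⁆` is `1/12` times the weighted Euler
derivation `∑ wᵢ Xᵢ ∂ᵢ`, which acts on weighted homogeneous polynomials of weight `k` as
multiplication by `k`.
-/

namespace MvPolynomial

variable {R σ : Type*}

def eulerDerivation [CommSemiring R] [Fintype σ] (w : σ → ℕ) :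
    Derivation R (MvPolynomial σ R) (MvPolynomial σ R) :=
  ∑ i, (w i • X i : MvPolynomial σ R) • pderiv i

theorem eulerDerivation_apply [CommSemiring R] [Fintype σ] (w : σ → ℕ) (φ : MvPolynomial σ R) :
    eulerDerivation w φ = ∑ i, w i • (X i * pderiv i φ) := by
  rw [eulerDerivation, ← Derivation.coeFnAddMonoidHom_apply, map_sum, Finset.sum_apply]
  simp only [Derivation.coeFnAddMonoidHom_apply, Derivation.smul_apply, smul_eq_mul,
    smul_mul_assoc]

theorem IsWeightedHomogeneous.eulerDerivation_apply [CommSemiring R] [Fintype σ] {w : σ → ℕ}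
    {n : ℕ} {φ : MvPolynomial σ R} (h : φ.IsWeightedHomogeneous w n) :
    eulerDerivation w φ = n • φ := by
  rw [MvPolynomial.eulerDerivation_apply, h.sum_weight_X_mul_pderiv]

theorem commutator_pderiv_apply_X [CommRing R] [DecidableEq σ]
    (D : Derivation R (MvPolynomial σ R) (MvPolynomial σ R)) (i j : σ) :
    ⁅(pderiv i : Derivation R (MvPolynomial σ R) (MvPolynomial σ R)), D⁆ (X j)
      = pderiv i (D (X j)) := by
  rw [Derivation.commutator_apply, pderiv_X]
  by_cases h : i = j
  · subst h
    simp
  · simp [Pi.single_eq_of_ne' h]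

end MvPolynomial

theorem pderiv_zero_lie_eq_smul_eulerDerivation
    (D : Derivation ℂ (MvPolynomial (Fin 3) ℂ) (MvPolynomial (Fin 3) ℂ))
    (hD2 : D (X 0) = (1 / 12 : ℂ) • ((X 0) ^ 2 - X 1))
    (hD4 : D (X 1) = (1 / 3 : ℂ) • (X 0 * X 1 - X 2))
    (hD6 : D (X 2) = (1 / 2 : ℂ) • (X 0 * X 2 - (X 1) ^ 2)) :
    ⁅(pderiv 0 : Derivation ℂ (MvPolynomial (Fin 3) ℂ) (MvPolynomial (Fin 3) ℂ)), D⁆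
      = (1 / 12 : ℂ) • eulerDerivation ![2, 4, 6] := by
  refine derivation_ext fun i => ?_
  rw [commutator_pderiv_apply_X, Derivation.smul_apply, eulerDerivation_apply]
  fin_cases i <;>
    simp [hD2, hD4, hD6, Fin.sum_univ_three, pderiv_X, ← Nat.cast_smul_eq_nsmul ℂ] <;> module

/-- For the Ramanujan–Serre derivation `D` on `R = ℂ[X₂, X₄, X₆]` and the `E₂`-derivative
`∂ = ∂/∂X₂`, every weighted homogeneous `P` of weight `k` satisfies
`∂(D(P)) = D(∂(P)) + (k/12)·P`. -/
theorem E2_derivative_commutator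
    (D : Derivation ℂ (MvPolynomial (Fin 3) ℂ) (MvPolynomial (Fin 3) ℂ))
    (hD2 : D (X 0) = (1 / 12 : ℂ) • ((X 0) ^ 2 - X 1))
    (hD4 : D (X 1) = (1 / 3 : ℂ) • (X 0 * X 1 - X 2))
    (hD6 : D (X 2) = (1 / 2 : ℂ) • (X 0 * X 2 - (X 1) ^ 2))
    (P : MvPolynomial (Fin 3) ℂ) (k : ℕ)
    (hP : P.IsWeightedHomogeneous ![2, 4, 6] k) :
    pderiv 0 (D P) = D (pderiv 0 P) + ((k : ℂ) / 12) • P := by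
  have hcomm := congrArg (· P) (pderiv_zero_lie_eq_smul_eulerDerivation D hD2 hD4 hD6)
  simp only [Derivation.commutator_apply, Derivation.smul_apply, hP.eulerDerivation_apply]
    at hcomm
  rw [← sub_eq_iff_eq_add', hcomm, ← Nat.cast_smul_eq_nsmul ℂ, smul_smul]
  congr 1
  ring

end
end

section
/- For every natural number k, every P ∈ R weighted homogeneous of weight k (for the weights 2, 4, 6 on X₂, X₄, X₆), and every integer n ≥ 1, one has ∂(Dⁿ(P)) = Dⁿ(∂(P)) + (n(k+n−1)/12)·D^{n−1}(P). -/
/-!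
The operators `∂ = ∂/∂X₂`, `D` and the weight operator `E = ∑ wᵢ Xᵢ ∂/∂Xᵢ` satisfy the
`sl₂`-type relations `⁅∂, D⁆ = E / 12` and `⁅E, D⁆ = 2 D`; all three are derivations, so it
suffices to check these on the generators. Moving `∂` past `Dⁿ` one factor at a time produces
`(1/12) ∑_{i<n} E (Dⁱ P)`, and on a `P` of weight `k` each `Dⁱ P` has weight `k + 2i`, i.e.
`E (Dⁱ P) = (k + 2i) Dⁱ P` by Euler's identity. Summing gives `n (k + n - 1) / 12`.
-/

namespace Module.End

variable {K M : Type*} [CommRing K] [AddCommGroup M] [Module K M]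
  {δ D E : Module.End K M} {a c k : K} {x : M}

lemma commutator_apply (f g : Module.End K M) (y : M) : ⁅f, g⁆ y = f (g y) - g (f y) := by
  rw [Ring.lie_def, LinearMap.sub_apply, mul_apply, mul_apply]

lemma apply_apply_of_lie_eq_smul {f g h : Module.End K M} (hfg : ⁅f, g⁆ = a • h) (y : M) :
    f (g y) = g (f y) + a • h y := by
  rw [← LinearMap.smul_apply, ← hfg, commutator_apply, add_sub_cancel]

lemma apply_pow_apply_of_lie_eq_smul (hED : ⁅E, D⁆ = c • D) (hx : E x = k • x) (m : ℕ) :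
    E ((D ^ m) x) = (k + m * c) • (D ^ m) x := by
  induction m with
  | zero => simpa using hx
  | succ m ih =>
    rw [pow_succ', mul_apply, apply_apply_of_lie_eq_smul hED, ih, map_smul]
    push_cast
    module

lemma lie_pow_succ_apply_of_lie_eq_smul (hδD : ⁅δ, D⁆ = a • E) (hED : ⁅E, D⁆ = c • D)
    (hx : E x = k • x) (n : ℕ) :
    ⁅δ, D ^ (n + 1)⁆ x = (a * ((n + 1) * k + (n + 1).choose 2 * c)) • (D ^ n) x := by
  induction n with
  | zero => simp [commutator_apply, apply_apply_of_lie_eq_smul hδD, hx, smul_smul]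
  | succ n ih =>
    rw [commutator_apply] at ih ⊢
    rw [pow_succ' D (n + 1), mul_apply, mul_apply, apply_apply_of_lie_eq_smul hδD,
      sub_eq_iff_eq_add.mp ih, map_add, map_smul, apply_pow_apply_of_lie_eq_smul hED hx,
      ← mul_apply, ← pow_succ', Nat.choose_succ_succ (n + 1), Nat.choose_one_right]
    push_cast
    module

end Module.End

open MvPolynomial

namespace MvPolynomial

variable {R σ : Type*} [CommSemiring R] [Fintype σ]

noncomputable def weightedEulerDerivation (w : σ → ℕ) :
    Derivation R (MvPolynomial σ R) (MvPolynomial σ R) :=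
  ∑ i, w i • (X i : MvPolynomial σ R) • pderiv i

lemma weightedEulerDerivation_apply (w : σ → ℕ) (φ : MvPolynomial σ R) :
    weightedEulerDerivation w φ = ∑ i, w i • (X i * pderiv i φ) := by
  change Derivation.coeFnAddMonoidHom (∑ i, _) φ = _
  rw [map_sum, Finset.sum_apply]
  simp [Derivation.smul_apply, smul_eq_mul]

lemma weightedEulerDerivation_X (w : σ → ℕ) (j : σ) :
    weightedEulerDerivation w (X j : MvPolynomial σ R) = w j • X j := by
  rw [weightedEulerDerivation_apply, Finset.sum_eq_single j
    (fun i _ hij => by rw [pderiv_X_of_ne (Ne.symm hij), mul_zero, smul_zero])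
    (fun hj => absurd (Finset.mem_univ j) hj), pderiv_X_self, mul_one]

lemma IsWeightedHomogeneous.weightedEulerDerivation_apply {w : σ → ℕ} {n : ℕ}
    {φ : MvPolynomial σ R} (h : φ.IsWeightedHomogeneous w n) :
    weightedEulerDerivation w φ = n • φ := by
  rw [MvPolynomial.weightedEulerDerivation_apply, h.sum_weight_X_mul_pderiv]

end MvPolynomial

section RamanujanSerre

variable (D : Derivation ℂ (MvPolynomial (Fin 3) ℂ) (MvPolynomial (Fin 3) ℂ))
  (hD2 : D (X 0) = (1 / 12 : ℂ) • ((X 0) ^ 2 - X 1))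
  (hD4 : D (X 1) = (1 / 3 : ℂ) • (X 0 * X 1 - X 2))
  (hD6 : D (X 2) = (1 / 2 : ℂ) • (X 0 * X 2 - (X 1) ^ 2))
include hD2 hD4 hD6

lemma lie_pderiv_zero_eq_of_ramanujanSerre :
    ⁅(pderiv 0 : Derivation ℂ (MvPolynomial (Fin 3) ℂ) _), D⁆ =
      (1 / 12 : ℂ) • weightedEulerDerivation ![2, 4, 6] := by
  refine derivation_ext fun i => ?_
  fin_cases i <;>
    simp [-nsmul_eq_mul, Derivation.commutator_apply, weightedEulerDerivation_X, hD2, hD4, hD6]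
  all_goals module

lemma lie_weightedEulerDerivation_eq_of_ramanujanSerre :
    ⁅weightedEulerDerivation (R := ℂ) ![2, 4, 6], D⁆ = (2 : ℂ) • D := by
  refine derivation_ext fun i => ?_
  fin_cases i <;>
    simp [-nsmul_eq_mul, Derivation.commutator_apply, weightedEulerDerivation_X, hD2, hD4, hD6,
      pow_two, mul_comm (X 1 : MvPolynomial (Fin 3) ℂ), mul_comm (X 2 : MvPolynomial (Fin 3) ℂ)]
  all_goals module

end RamanujanSerre

/-- For the Ramanujan–Serre derivation `D` on `R = ℂ[X₂, X₄, X₆]` and the `E₂`-derivative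
`∂ = ∂/∂X₂`, every weighted homogeneous `P` of weight `k` satisfies, for every `n ≥ 1`,
`∂(Dⁿ(P)) = Dⁿ(∂(P)) + (n(k+n−1)/12)·D^{n−1}(P)`. -/
theorem E2_derivative_iterate_commutator
    (D : Derivation ℂ (MvPolynomial (Fin 3) ℂ) (MvPolynomial (Fin 3) ℂ))
    (hD2 : D (X 0) = (1 / 12 : ℂ) • ((X 0) ^ 2 - X 1))
    (hD4 : D (X 1) = (1 / 3 : ℂ) • (X 0 * X 1 - X 2))
    (hD6 : D (X 2) = (1 / 2 : ℂ) • (X 0 * X 2 - (X 1) ^ 2))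
    (P : MvPolynomial (Fin 3) ℂ) (k : ℕ)
    (hP : P.IsWeightedHomogeneous ![2, 4, 6] k)
    (n : ℕ) (hn : 1 ≤ n) :
    pderiv 0 ((⇑D)^[n] P) =
      (⇑D)^[n] (pderiv 0 P) +
        ((n : ℂ) * ((k : ℂ) + (n : ℂ) - 1) / 12) • (⇑D)^[n - 1] P := by
  have hδD := congrArg Derivation.toLinearMap (lie_pderiv_zero_eq_of_ramanujanSerre D hD2 hD4 hD6)
  have hED := congrArg Derivation.toLinearMap
    (lie_weightedEulerDerivation_eq_of_ramanujanSerre D hD2 hD4 hD6)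
  rw [Derivation.commutator_coe_linear_map, Derivation.coe_smul_linearMap] at hδD hED
  have hEP : weightedEulerDerivation (R := ℂ) ![2, 4, 6] P = (k : ℂ) • P := by
    rw [hP.weightedEulerDerivation_apply, Nat.cast_smul_eq_nsmul]
  obtain ⟨m, rfl⟩ := Nat.exists_eq_add_of_le' hn
  have key := Module.End.lie_pow_succ_apply_of_lie_eq_smul hδD hED hEP m
  rw [Module.End.commutator_apply, sub_eq_iff_eq_add'] at key
  simp only [Module.End.pow_apply, Derivation.coeFn_coe] at key
  rw [key, Nat.add_sub_cancel, Nat.cast_choose_two]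
  congr 2
  push_cast
  ring
end

section
/- Let A be the integer 6×6 matrix with rows (1,1,0,0,0,0), (−1,0,0,0,0,0), (3,3,1,0,0,−1), (−1,0,0,0,1,−3), (0,10,3,−1,1,−3), (0,3,1,0,0,0), and let η be the 6×6 integer matrix with block form ((0, I₃), (−I₃, 0)). Then A is symplectic, i.e. Aᵀ·η·A = η, and A satisfies A² = A − 1; consequently A⁶ = 1, so A has order 6. -/
noncomputable section

/-- The order-6 monodromy element `A` (called `A³` in the paper) of the elliptic
Calabi–Yau threefold `X₁₈(1,1,1,6,9)`. -/
def A : Matrix (Fin 6) (Fin 6) ℤ :=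
  !![1, 1, 0, 0, 0, 0;
     -1, 0, 0, 0, 0, 0;
     3, 3, 1, 0, 0, -1;
     -1, 0, 0, 0, 1, -3;
     0, 10, 3, -1, 1, -3;
     0, 3, 1, 0, 0, 0]

/-- The symplectic pairing `η` in block form `((0, I₃), (−I₃, 0))`. -/
def η : Matrix (Fin 6) (Fin 6) ℤ :=
  !![0, 0, 0, 1, 0, 0;
     0, 0, 0, 0, 1, 0;
     0, 0, 0, 0, 0, 1;
     -1, 0, 0, 0, 0, 0;
     0, -1, 0, 0, 0, 0;
     0, 0, -1, 0, 0, 0]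

lemma hsymp : A.transpose * η * A = η := by
  unfold A η; decide

lemma hsq : A ^ 2 = A - 1 := by
  unfold A; rw [pow_two]; decide

lemma hcube : A ^ 3 = -1 := by
  rw [pow_succ, hsq, sub_mul, one_mul, ← pow_two, hsq]
  abel

lemma h6 : A ^ 6 = 1 := by
  rw [show A ^ 6 = (A ^ 3) ^ 2 from (pow_mul A 3 2), hcube]
  simp

lemma hA_ne_one : A ≠ 1 := by
  unfold A; decide

/-- `A` is symplectic (`Aᵀ·η·A = η`) and satisfies `A² = A − 1`; consequently `A⁶ = 1`,
so `A` has order `6`. -/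
theorem A_symplectic_order_six :
    A.transpose * η * A = η ∧ A ^ 2 = A - 1 ∧ A ^ 6 = 1 ∧ orderOf A = 6 := by
  refine ⟨hsymp, hsq, h6, ?_⟩
  apply orderOf_eq_of_pow_and_pow_div_prime (by norm_num) h6
  intro p hp hdvd
  have hle : p ≤ 6 := Nat.le_of_dvd (by norm_num) hdvd
  have h2 : 2 ≤ p := hp.two_le
  interval_cases p
  · -- p = 2 : A^3 ≠ 1
    rw [show (6 : ℕ) / 2 = 3 from rfl, hcube]
    intro h
    have := congrArg (fun M => M 0 0) h
    simp [Matrix.one_apply] at this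
  · -- p = 3 : A^2 ≠ 1
    rw [show (6 : ℕ) / 3 = 2 from rfl, hsq]
    intro h
    have h01 := congrArg (fun M => M 0 1) h
    simp [A, Matrix.one_apply, Matrix.sub_apply] at h01
  · exact absurd hdvd (by norm_num)
  · exact absurd hdvd (by norm_num)
  · exact absurd hp (by decide)
end
end
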